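/- arXiv:2601.00667 — 3 statements merged into one kernel-verified Lean document; each statement's English description precedes it below -/
import Mathlib

section
/- Let h be a multisegment, a an integer, and Δ₁, …, Δₖ segments all with left endpoint a, forming a multiset m admissible to h. Then the multiset {Υ(Δ₁, h), Υ(Δ₂, r(Δ₁,h)), Υ(Δ₃, r({Δ₁,Δ₂},h)), …, Υ(Δₖ, r({Δ₁,…,Δ_{k−1}},h))} does not depend on the chosen enumeration Δ₁, …, Δₖ of m. (Hence the multiset fs(m,h) of first segments is well-defined.) -/
noncomputable section
open Classical

/-- A segment `[a,b]`: a pair of integers with `a ≤ b`, identified with the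
integer interval `{a, a+1, …, b}`. -/
def Seg : Type := {p : ℤ × ℤ // p.1 ≤ p.2}

/-- Constructor for segments. -/
def Seg.mk (a b : ℤ) (hab : a ≤ b) : Seg := Subtype.mk (a, b) hab

instance : DecidableEq Seg := inferInstanceAs (DecidableEq {p : ℤ × ℤ // p.1 ≤ p.2})

instance : Inhabited Seg := ⟨Seg.mk 0 0 le_rfl⟩

/-- The lexicographic ordering `≼ᴸ` on segments: `[a,b] ≤ [a',b']` iff `a < a'`,
or `a = a'` and `b ≤ b'`. -/
instance : LinearOrder Seg :=
  LinearOrder.lift' (fun Δ => toLex (Subtype.val Δ))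
    (fun _ _ hh => Subtype.ext (toLex.injective hh))

/-- `a(Δ)`, the left endpoint. -/
def segA (Δ : Seg) : ℤ := (Subtype.val Δ).1

/-- `b(Δ)`, the right endpoint. -/
def segB (Δ : Seg) : ℤ := (Subtype.val Δ).2

/-- `[a,b]` as a multiset of segments: a singleton if `a ≤ b`, empty otherwise
("empty segments are discarded"). -/
def mkSeg? (a b : ℤ) : Multiset Seg := if h : a ≤ b then {Seg.mk a b h} else 0

/-- `⁻Δ = [a+1,b]`, as a multiset (the empty segment being discarded). -/
def negSeg (Δ : Seg) : Multiset Seg := mkSeg? (segA Δ + 1) (segB Δ)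

/-- `⁻m` for a multisegment `m`. -/
def negM (m : Multiset Seg) : Multiset Seg := m.bind negSeg

/-- `m[c]`: the submultiset of segments of `m` starting at `c`. -/
def atc (m : Multiset Seg) (c : ℤ) : Multiset Seg := m.filter (fun Δ => segA Δ = c)

/-- `Δ ⊆ Δ'` as intervals. -/
def Subseg (Δ Δ' : Seg) : Prop := segA Δ' ≤ segA Δ ∧ segB Δ ≤ segB Δ'

/-- Two segments are linked: their union is an interval and neither contains
the other. -/
def Linked (Δ Δ' : Seg) : Prop :=
  segA Δ ≤ segB Δ' + 1 ∧ segA Δ' ≤ segB Δ + 1 ∧ ¬ Subseg Δ Δ' ∧ ¬ Subseg Δ' Δ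

/-- `Δ = [a,b]` is admissible to `h`: `h` contains a segment `[a,c]` with `c ≥ b`. -/
def SegAdmissible (Δ : Seg) (h : Multiset Seg) : Prop :=
  ∃ D ∈ h, segA D = segA Δ ∧ segB Δ ≤ segB D

/-- The tail of the removal sequence: recursively pick the `≺ᴸ`-minimal segment
`[aᵢ,bᵢ]` of `h` with `a_{i-1} < aᵢ` and `b ≤ bᵢ < b_{i-1}`. -/
def removalTail (h : Multiset Seg) (b : ℤ) : ℕ → ℤ → ℤ → List Seg
  | 0, _, _ => []
  | fuel + 1, aprev, bprev =>
    if hx : ∃ D, (D ∈ h ∧ aprev < segA D ∧ b ≤ segB D ∧ segB D < bprev) ∧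
        ∀ D', (D' ∈ h ∧ aprev < segA D' ∧ b ≤ segB D' ∧ segB D' < bprev) → D ≤ D' then
      Classical.choose hx ::
        removalTail h b fuel (segA (Classical.choose hx)) (segB (Classical.choose hx))
    else []

/-- The removal sequence for `(Δ, h)`: `Δ₁` is a shortest segment `[a,c]` of `h`
with `c ≥ b`, followed by the recursively chosen segments. (Empty if `Δ` is not
admissible to `h`.) -/
def removalSeq (Δ : Seg) (h : Multiset Seg) : List Seg :=
  if hx : ∃ D, (D ∈ h ∧ segA D = segA Δ ∧ segB Δ ≤ segB D) ∧
      ∀ D', (D' ∈ h ∧ segA D' = segA Δ ∧ segB Δ ≤ segB D') → segB D ≤ segB D' then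
    Classical.choose hx ::
      removalTail h (segB Δ) (segB (Classical.choose hx) - segB Δ).toNat
        (segA (Classical.choose hx)) (segB (Classical.choose hx))
  else []

/-- `Υ(Δ,h)`: the first segment of the removal sequence for `(Δ,h)`. -/
def Upsilon (Δ : Seg) (h : Multiset Seg) : Seg := (removalSeq Δ h).headD default

/-- The truncations `Δ₁ᵗʳ, …, Δᵣᵗʳ` of a removal sequence:
`Δᵢᵗʳ = [a_{i+1}, bᵢ]` for `i < r` and `Δᵣᵗʳ = [b+1, bᵣ]` (possibly empty). -/
def truncList (b : ℤ) : List Seg → Multiset Seg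
  | [] => 0
  | [D] => mkSeg? (b + 1) (segB D)
  | D :: D' :: rest => mkSeg? (segA D') (segB D) + truncList b (D' :: rest)

/-- `r(Δ,h) = h − Δ₁ − … − Δᵣ + Δ₁ᵗʳ + … + Δᵣᵗʳ`, with `none` playing the role
of the infinity multisegment `∞`. -/
def segRemove (Δ : Seg) (h : Multiset Seg) : Option (Multiset Seg) :=
  if SegAdmissible Δ h then
    some (h - (removalSeq Δ h : Multiset Seg) + truncList (segB Δ) (removalSeq Δ h))
  else none

/-- Iterated removal along a list of segments (also `r(Δ,∞) = ∞`). -/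
def rList : List Seg → Option (Multiset Seg) → Option (Multiset Seg)
  | [], o => o
  | Δ :: rest, o => rList rest (o.bind (fun x => segRemove Δ x))

/-- `r(m,h)` for a multisegment `m`: apply the removals along the segments of
`m` listed in an ascending (here: `≺ᴸ`-sorted) order. -/
def rM (m h : Multiset Seg) : Option (Multiset Seg) :=
  rList (m.sort (· ≤ ·)) (some h)

/-- The smallest integer `a` with `n[a] ≠ ∅` (junk value `0` for `n = ∅`). -/
def minStart (n : Multiset Seg) : ℤ := ((n.map segA).sort (· ≤ ·)).headD 0

/-- `Υ(Δ₁,r₀), Υ(Δ₂,r₁), …` computed sequentially along a list of segments. -/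
def fsList : List Seg → Multiset Seg → Multiset Seg
  | [], _ => 0
  | Δ :: rest, h =>
    Upsilon Δ h ::ₘ
      (match segRemove Δ h with
        | some h' => fsList rest h'
        | none => 0)

/-- `fs(n,h)`: with `a` the smallest integer such that `n[a] ≠ ∅` and
`n[a] = {Δ₁, …, Δₖ}`, this is `{Υ(Δ₁,r₀), …, Υ(Δₖ,r_{k-1})}` if `n[a]` is
admissible to `h`, and `∅` otherwise (also `fs(∅,h) = ∅`). -/
def fs (n h : Multiset Seg) : Multiset Seg :=
  if n = 0 then 0
  else if rM (atc n (minStart n)) h ≠ none then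
    fsList ((atc n (minStart n)).sort (· ≤ ·)) h
  else 0

/-- `trr(n,h) = h − fs(n,h) + ⁻(fs(n,h))`. -/
def trr (n h : Multiset Seg) : Multiset Seg := h - fs n h + negM (fs n h)

/-- `trd(n,h) = n − n[a] + ⁻(n[a])` where `a` is the smallest integer with
`n[a] ≠ ∅` (and `trd(∅,h) = ∅`). -/
def trd (n h : Multiset Seg) : Multiset Seg :=
  if n = 0 then 0 else n - atc n (minStart n) + negM (atc n (minStart n))

/-- The pairs `(nᵢ, hᵢ)` of the fine chain: `n₀ = n`, `h₀ = h`,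
`nᵢ = trd(n_{i-1}, h_{i-1})`, `hᵢ = trr(n_{i-1}, h_{i-1})`. -/
def fcPair (n h : Multiset Seg) : ℕ → Multiset Seg × Multiset Seg
  | 0 => (n, h)
  | i + 1 => (trd (fcPair n h i).1 (fcPair n h i).2, trr (fcPair n h i).1 (fcPair n h i).2)

/-- The fine chain `fc_h(n)`: the sequence `fs(n₀,h₀), fs(n₁,h₁), …`. -/
def fc (h n : Multiset Seg) (i : ℕ) : Multiset Seg := fs (fcPair n h i).1 (fcPair n h i).2

/-- `n` is obtained from `m` by an elementary intersection-union operation: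
`n = m − Δ − Δ' + (Δ ∪ Δ') + (Δ ∩ Δ')` for a pair of linked segments `Δ, Δ'`
of `m` (intersection omitted if empty). -/
def elemIU (m n : Multiset Seg) : Prop :=
  ∃ Δ Δ', Δ ∈ m ∧ Δ' ∈ m.erase Δ ∧ Linked Δ Δ' ∧
    n = (m.erase Δ).erase Δ'
        + mkSeg? (min (segA Δ) (segA Δ')) (max (segB Δ) (segB Δ'))
        + mkSeg? (max (segA Δ) (segA Δ')) (min (segB Δ) (segB Δ'))

/-- The Zelevinsky ordering: `n ≤_Z m` iff `n = m` or `n` is obtained from `m`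
by a finite sequence of elementary intersection-union operations. -/
def leZ (n m : Multiset Seg) : Prop := Relation.ReflTransGen elemIU m n

/-- The cuspidal support of a multisegment: the multiset union of its segments,
as a multiset of integers. -/
def csupp (m : Multiset Seg) : Multiset ℤ :=
  m.bind (fun Δ => (Finset.Icc (segA Δ) (segB Δ)).val)

/-- The `b`-values of a multisegment, sorted in descending order. -/
def bDesc (m : Multiset Seg) : List ℤ := ((m.map segB).sort (· ≤ ·)).reverse

/-- `m₁ ≤ᵃ_c m₂` for multisegments at a point `c`: with segments labelled
`Δ_{1,k} ≤ᵃ_c … ≤ᵃ_c Δ_{1,1}` and `Δ_{2,r} ≤ᵃ_c … ≤ᵃ_c Δ_{2,1}`, require `k ≤ r`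
and `Δ_{1,i} ≤ᵃ_c Δ_{2,i}` for all `i ≤ k`. -/
def leA (m₁ m₂ : Multiset Seg) : Prop :=
  (bDesc m₁).length ≤ (bDesc m₂).length ∧
    ∀ i < (bDesc m₁).length, (bDesc m₁).getD i 0 ≤ (bDesc m₂).getD i 0

/-- `m₁ <ᵃ_c m₂`. -/
def ltA (m₁ m₂ : Multiset Seg) : Prop := leA m₁ m₂ ∧ m₁ ≠ m₂

/-- The fine chain ordering `n <^{fc} n'` (with respect to `h`). -/
def ltFC (h n n' : Multiset Seg) : Prop :=
  ∃ i, (∀ j < i, fc h n j = fc h n' j) ∧ ltA (fc h n i) (fc h n' i)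

/-- `n ≤^{fc} n'`: either `n <^{fc} n'` or the two fine chains are equal. -/
def leFC (h n n' : Multiset Seg) : Prop := ltFC h n n' ∨ ∀ i, fc h n i = fc h n' i

/-- Local minimizability of `(n,h)`: with `a` the smallest integer such that
`n[a] ≠ ∅`, there is a segment `Δ̄` in `n[a+1]` with
`|{Δ ∈ n[a] : Δ̄ ⊆ Δ}| < |{Δ ∈ fs(n,h) : Δ̄ ⊆ Δ}|`. -/
def locallyMin (n h : Multiset Seg) : Prop :=
  ∃ Δb ∈ atc n (minStart n + 1),
    ((atc n (minStart n)).filter (fun Δ => Subseg Δb Δ)).card <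
      ((fs n h).filter (fun Δ => Subseg Δb Δ)).card

/-- The shortest segment of the removal sequence for `(Δ,h)` whose interval
contains `x` (by the nesting property, the last such one in the sequence). -/
def shortestCont (Δ : Seg) (h : Multiset Seg) (x : ℤ) : Seg :=
  (((removalSeq Δ h).filter (fun D => decide (segA D ≤ x ∧ x ≤ segB D))).getLast?).getD default

/-- The non-overlapping property for `(Δ, Δ', h)`: for the shortest segment `Δ̄`
in the removal sequence for `(Δ,h)` containing `a(Δ') − 1`, one has `Δ' ⊄ Δ̄`. -/
def NonOverlap (Δ Δ' : Seg) (h : Multiset Seg) : Prop :=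
  ¬ Subseg Δ' (shortestCont Δ h (segA Δ' - 1))

/-- `ε_Δ(h) = |{Δ̃ ∈ h[a(Δ)] : Δ ⊆ Δ̃}|`, counted with multiplicity. -/
def epsilonSeg (Δ : Seg) (h : Multiset Seg) : ℕ :=
  ((atc h (segA Δ)).filter (fun D => Subseg Δ D)).card

/-- `η_{Δ'}(h) = η_{Δ'}(h')`: componentwise equality of
`(ε_{[a',b']}, ε_{[a'+1,b']}, …, ε_{[b',b']})`. -/
def etaEq (Δ' : Seg) (h h' : Multiset Seg) : Prop :=
  ∀ c, segA Δ' ≤ c → ∀ hc : c ≤ segB Δ',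
    epsilonSeg (Seg.mk c (segB Δ') hc) h = epsilonSeg (Seg.mk c (segB Δ') hc) h'

/-- The intermediate segment property for `(Δ, Δ', h)`. -/
def IntermediateSeg (Δ Δ' : Seg) (h : Multiset Seg) : Prop :=
  ∃ D ∈ h, segA Δ ≤ segA D ∧ segA D < segA Δ' ∧ segB Δ ≤ segB D ∧ segB D < segB Δ'

/-- Helper to build segments from literals. -/
def sg (a b : ℤ) (hab : a ≤ b := by decide) : Seg := Seg.mk a b hab

/-! Removing a segment `Δ` that starts at `a` touches the slice `h[a]` only by deleting
`Υ(Δ,h)`, a shortest segment of `h[a]` reaching `b(Δ)`; every later segment of the removal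
sequence starts strictly to the right of `a`. So for segments all starting at `a` the sequential
process only sees the slice `h[a]`, on which it is a greedy matching. Two consecutive greedy
picks with thresholds `b` and `b'` take the same two segments in either order, so adjacent
transpositions of the enumeration do not change the multiset of first segments. -/

lemma Seg.ext {D E : Seg} (ha : segA D = segA E) (hb : segB D = segB E) : D = E :=
  Subtype.ext (Prod.ext ha hb)

lemma mem_atc {h : Multiset Seg} {c : ℤ} {D : Seg} :
    D ∈ atc h c ↔ D ∈ h ∧ segA D = c := by
  simp [atc]

lemma segA_of_mem_mkSeg? {x y : ℤ} {E : Seg} (hE : E ∈ mkSeg? x y) : segA E = x := by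
  unfold mkSeg? at hE
  split at hE
  · rw [Multiset.mem_singleton] at hE
    subst hE
    rfl
  · simp at hE

lemma segAdmissible_iff_exists_mem_atc {Δ : Seg} {h : Multiset Seg} :
    SegAdmissible Δ h ↔ ∃ D ∈ atc h (segA Δ), segB Δ ≤ segB D := by
  simp only [SegAdmissible, mem_atc, and_assoc]

def IsShortestReaching (b : ℤ) (S : Multiset Seg) (D : Seg) : Prop :=
  D ∈ S ∧ b ≤ segB D ∧ ∀ D' ∈ S, b ≤ segB D' → segB D ≤ segB D'

section IsShortestReaching

variable {a b b' : ℤ} {S : Multiset Seg} {c c' : Seg}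

lemma IsShortestReaching.unique (hS : ∀ D ∈ S, segA D = a)
    (hc : IsShortestReaching b S c) (hc' : IsShortestReaching b S c') : c = c' :=
  Seg.ext ((hS c hc.1).trans (hS c' hc'.1).symm)
    (le_antisymm (hc.2.2 c' hc'.1 hc'.2.1) (hc'.2.2 c hc.1 hc.2.1))

lemma IsShortestReaching.swap_of_le (hc : IsShortestReaching b S c)
    (hc' : IsShortestReaching b' (S.erase c) c') (hcc' : segB c ≤ segB c')
    (hb'c : b' ≤ segB c) :
    IsShortestReaching b' S c ∧ IsShortestReaching b (S.erase c) c' := by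
  refine ⟨⟨hc.1, hb'c, fun D hD hb'D => ?_⟩,
    ⟨hc'.1, by linarith [hc.2.1], fun D hD hbD => ?_⟩⟩
  · by_contra! hlt
    have hDc : D ≠ c := by rintro rfl; omega
    have := hc'.2.2 D ((Multiset.mem_erase_of_ne hDc).mpr hD) hb'D
    omega
  · have := hc.2.2 D (Multiset.mem_of_mem_erase hD) hbD
    exact hc'.2.2 D hD (by omega)

lemma IsShortestReaching.swap_of_not_le (hc : IsShortestReaching b S c)
    (hc' : IsShortestReaching b' (S.erase c) c') (h : ¬ (segB c ≤ segB c' ∧ b' ≤ segB c)) :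
    IsShortestReaching b' S c' ∧ IsShortestReaching b (S.erase c') c := by
  have hlt : segB c' < segB c ∨ segB c < b' := by omega
  have hcc' : c ≠ c' := by rintro rfl; have := hc'.2.1; omega
  refine ⟨⟨Multiset.mem_of_mem_erase hc'.1, hc'.2.1, fun D hD hb'D => ?_⟩,
    ⟨(Multiset.mem_erase_of_ne hcc').mpr hc.1, hc.2.1,
      fun D hD hbD => hc.2.2 D (Multiset.mem_of_mem_erase hD) hbD⟩⟩
  by_cases hDc : D = c
  · subst hDc
    omega
  · exact hc'.2.2 D ((Multiset.mem_erase_of_ne hDc).mpr hD) hb'D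

lemma IsShortestReaching.swap (hc : IsShortestReaching b S c)
    (hc' : IsShortestReaching b' (S.erase c) c') :
    ∃ d e, IsShortestReaching b' S d ∧ IsShortestReaching b (S.erase d) e ∧
      (∀ M, d ::ₘ e ::ₘ M = c ::ₘ c' ::ₘ M) ∧
      (S.erase d).erase e = (S.erase c).erase c' := by
  by_cases hle : segB c ≤ segB c' ∧ b' ≤ segB c
  · obtain ⟨hd, he⟩ := hc.swap_of_le hc' hle.1 hle.2
    exact ⟨c, c', hd, he, fun _ => rfl, rfl⟩
  · obtain ⟨hd, he⟩ := hc.swap_of_not_le hc' hle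
    exact ⟨c', c, hd, he, fun M => Multiset.cons_swap c' c M, Multiset.erase_comm S c' c⟩

end IsShortestReaching

section Removal

variable {Δ : Seg} {h h' : Multiset Seg}

lemma lt_segA_of_mem_removalTail (b : ℤ) :
    ∀ (fuel : ℕ) (ap bp : ℤ), ∀ D ∈ removalTail h b fuel ap bp, ap < segA D
  | 0, _, _, D, hD => by simp [removalTail] at hD
  | fuel + 1, ap, bp, D, hD => by
    rw [removalTail] at hD
    split at hD
    · rename_i hx
      have hap := (Classical.choose_spec hx).1.2.1
      rcases List.mem_cons.mp hD with rfl | hD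
      · exact hap
      · exact hap.trans (lt_segA_of_mem_removalTail b fuel _ _ D hD)
    · simp at hD

lemma SegAdmissible.exists_shortest (hadm : SegAdmissible Δ h) :
    ∃ D, (D ∈ h ∧ segA D = segA Δ ∧ segB Δ ≤ segB D) ∧
      ∀ D', (D' ∈ h ∧ segA D' = segA Δ ∧ segB Δ ≤ segB D') → segB D ≤ segB D' := by
  obtain ⟨D₀, hD₀, hD₀a, hD₀b⟩ := hadm
  have hne : (h.toFinset.filter (fun D => segA D = segA Δ ∧ segB Δ ≤ segB D)).Nonempty :=
    ⟨D₀, by simpa using ⟨hD₀, hD₀a, hD₀b⟩⟩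
  obtain ⟨D, hD, hmin⟩ := Finset.exists_min_image _ segB hne
  simp only [Finset.mem_filter, Multiset.mem_toFinset] at hD hmin
  exact ⟨D, hD, fun D' hD' => hmin D' hD'⟩

lemma SegAdmissible.removalSeq_spec (hadm : SegAdmissible Δ h) :
    ∃ tail, removalSeq Δ h = Upsilon Δ h :: tail ∧
      IsShortestReaching (segB Δ) (atc h (segA Δ)) (Upsilon Δ h) ∧
      ∀ D ∈ tail, segA Δ < segA D := by
  have hx := hadm.exists_shortest
  obtain ⟨⟨hmem, hA, hB⟩, hmin⟩ := Classical.choose_spec hx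
  have hseq : removalSeq Δ h = Classical.choose hx ::
      removalTail h (segB Δ) (segB (Classical.choose hx) - segB Δ).toNat
        (segA (Classical.choose hx)) (segB (Classical.choose hx)) := by
    rw [removalSeq, dif_pos hx]
  have hU : Upsilon Δ h = Classical.choose hx := by rw [Upsilon, hseq]; rfl
  rw [hU]
  refine ⟨_, hseq, ⟨mem_atc.mpr ⟨hmem, hA⟩, hB, fun D' hD' hbD' =>
    hmin D' ⟨(mem_atc.mp hD').1, (mem_atc.mp hD').2, hbD'⟩⟩, fun D hD => ?_⟩
  exact hA ▸ lt_segA_of_mem_removalTail _ _ _ _ D hD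

lemma removalSeq_of_not_segAdmissible (hadm : ¬ SegAdmissible Δ h) : removalSeq Δ h = [] := by
  rw [removalSeq, dif_neg]
  rintro ⟨D, ⟨hmem, hA, hB⟩, -⟩
  exact hadm ⟨D, hmem, hA, hB⟩

lemma segA_of_mem_truncList (b : ℤ) :
    ∀ (l : List Seg) (E : Seg), E ∈ truncList b l →
      (∃ D ∈ l.tail, segA E = segA D) ∨ segA E = b + 1
  | [], E, hE => by simp [truncList] at hE
  | [_], E, hE => Or.inr (segA_of_mem_mkSeg? hE)
  | D :: D' :: rest, E, hE => by
    rw [truncList] at hE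
    rcases Multiset.mem_add.mp hE with hE | hE
    · exact Or.inl ⟨D', by simp, segA_of_mem_mkSeg? hE⟩
    · rcases segA_of_mem_truncList b (D' :: rest) E hE with ⟨D₂, hD₂, hEq⟩ | hb
      · exact Or.inl ⟨D₂, List.mem_cons_of_mem _ hD₂, hEq⟩
      · exact Or.inr hb

lemma segRemove_eq_none_iff : segRemove Δ h = none ↔ ¬ SegAdmissible Δ h := by
  by_cases hadm : SegAdmissible Δ h <;> simp [segRemove, hadm]

-- The removal sequence meets `h[a(Δ)]` only in `Υ(Δ,h)`, and no truncation starts at `a(Δ)`.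
lemma atc_sub_removalSeq_add_truncList (hadm : SegAdmissible Δ h) :
    atc (h - (removalSeq Δ h : Multiset Seg) + truncList (segB Δ) (removalSeq Δ h)) (segA Δ) =
      (atc h (segA Δ)).erase (Upsilon Δ h) := by
  obtain ⟨tail, hseq, hpick, htail⟩ := hadm.removalSeq_spec
  have hUA : segA (Upsilon Δ h) = segA Δ := (mem_atc.mp hpick.1).2
  have hseq_atc : atc (removalSeq Δ h : Multiset Seg) (segA Δ) = {Upsilon Δ h} := by
    have htail_atc : atc (tail : Multiset Seg) (segA Δ) = 0 :=
      Multiset.filter_eq_nil.mpr fun D hD => (htail D hD).ne'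
    rw [hseq, ← Multiset.cons_coe, atc,
      Multiset.filter_cons_of_pos (p := fun D => segA D = segA Δ) _ hUA, ← atc, htail_atc]
    rfl
  have htrunc_atc : atc (truncList (segB Δ) (removalSeq Δ h)) (segA Δ) = 0 := by
    refine Multiset.filter_eq_nil.mpr fun E hE => ?_
    rcases segA_of_mem_truncList _ _ _ hE with ⟨D, hD, hEq⟩ | hEq
    · rw [hseq] at hD
      exact hEq ▸ (htail D hD).ne'
    · have : segA Δ ≤ segB Δ := Δ.2
      omega
  simp only [atc] at hseq_atc htrunc_atc ⊢
  rw [Multiset.filter_add, Multiset.filter_sub, hseq_atc, htrunc_atc, Multiset.sub_singleton,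
    add_zero]

lemma segRemove_eq_some {h₁ : Multiset Seg} (hr : segRemove Δ h = some h₁) :
    IsShortestReaching (segB Δ) (atc h (segA Δ)) (Upsilon Δ h) ∧
      atc h₁ (segA Δ) = (atc h (segA Δ)).erase (Upsilon Δ h) := by
  have hadm : SegAdmissible Δ h := by
    by_contra hn
    rw [segRemove_eq_none_iff.mpr hn] at hr
    cases hr
  obtain ⟨-, -, hpick, -⟩ := hadm.removalSeq_spec
  simp only [segRemove, if_pos hadm, Option.some.injEq] at hr
  exact ⟨hpick, hr ▸ atc_sub_removalSeq_add_truncList hadm⟩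

lemma IsShortestReaching.exists_segRemove_eq_some {D : Seg}
    (hD : IsShortestReaching (segB Δ) (atc h (segA Δ)) D) :
    ∃ h₁, segRemove Δ h = some h₁ ∧ Upsilon Δ h = D ∧
      atc h₁ (segA Δ) = (atc h (segA Δ)).erase D := by
  have hadm : SegAdmissible Δ h := segAdmissible_iff_exists_mem_atc.mpr ⟨D, hD.1, hD.2.1⟩
  obtain ⟨h₁, hr⟩ : ∃ h₁, segRemove Δ h = some h₁ := ⟨_, if_pos hadm⟩
  obtain ⟨hpick, hatc⟩ := segRemove_eq_some hr
  have hU := hpick.unique (fun E hE => (mem_atc.mp hE).2) hD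
  exact ⟨h₁, hr, hU, hU ▸ hatc⟩

lemma exists_segRemove_eq_some_of_atc_eq {h₁ : Multiset Seg}
    (hc : atc h (segA Δ) = atc h' (segA Δ)) (hr : segRemove Δ h = some h₁) :
    ∃ h₁', segRemove Δ h' = some h₁' ∧ Upsilon Δ h = Upsilon Δ h' ∧
      atc h₁ (segA Δ) = atc h₁' (segA Δ) := by
  obtain ⟨hpick, hatc⟩ := segRemove_eq_some hr
  obtain ⟨h₁', hr', hU, hatc'⟩ := IsShortestReaching.exists_segRemove_eq_some (hc ▸ hpick)
  exact ⟨h₁', hr', hU.symm, by rw [hatc, hatc', hc]⟩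

lemma segRemove_eq_none_of_atc_eq (hc : atc h (segA Δ) = atc h' (segA Δ))
    (hr : segRemove Δ h = none) : segRemove Δ h' = none ∧ Upsilon Δ h = Upsilon Δ h' := by
  have hadm := segRemove_eq_none_iff.mp hr
  have hadm' : ¬ SegAdmissible Δ h' := by
    rwa [segAdmissible_iff_exists_mem_atc, ← hc, ← segAdmissible_iff_exists_mem_atc]
  refine ⟨segRemove_eq_none_iff.mpr hadm', ?_⟩
  rw [Upsilon, Upsilon, removalSeq_of_not_segAdmissible hadm,
    removalSeq_of_not_segAdmissible hadm']

end Removal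

section Sequential

variable {a : ℤ}

lemma rList_none : ∀ l : List Seg, rList l none = none
  | [] => rfl
  | _ :: rest => rList_none rest

lemma exists_segRemove_of_rList_cons_ne_none {Δ : Seg} {rest : List Seg} {h : Multiset Seg}
    (hne : rList (Δ :: rest) (some h) ≠ none) :
    ∃ h₁, segRemove Δ h = some h₁ ∧ rList rest (some h₁) ≠ none := by
  cases hr : segRemove Δ h with
  | none => simp [rList, hr, rList_none] at hne
  | some h₁ => exact ⟨h₁, rfl, by simpa [rList, hr] using hne⟩

lemma fsList_congr_atc : ∀ {l : List Seg} {h h' : Multiset Seg},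
    (∀ Δ ∈ l, segA Δ = a) → atc h a = atc h' a → fsList l h = fsList l h'
  | [], _, _, _, _ => rfl
  | Δ :: rest, h, h', hl, hc => by
    have hc : atc h (segA Δ) = atc h' (segA Δ) := by rwa [hl Δ List.mem_cons_self]
    cases hr : segRemove Δ h with
    | none =>
      obtain ⟨hr', hU⟩ := segRemove_eq_none_of_atc_eq hc hr
      simp only [fsList, hr, hr', hU]
    | some h₁ =>
      obtain ⟨h₁', hr', hU, hc₁⟩ := exists_segRemove_eq_some_of_atc_eq hc hr
      rw [hl Δ List.mem_cons_self] at hc₁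
      simp only [fsList, hr, hr', hU,
        fsList_congr_atc (fun D hD => hl D (List.mem_cons_of_mem _ hD)) hc₁]

lemma rList_ne_none_of_atc_eq : ∀ {l : List Seg} {h h' : Multiset Seg},
    (∀ Δ ∈ l, segA Δ = a) → atc h a = atc h' a →
      rList l (some h) ≠ none → rList l (some h') ≠ none
  | [], _, _, _, _, _ => Option.some_ne_none _
  | Δ :: rest, h, h', hl, hc, hne => by
    have hc : atc h (segA Δ) = atc h' (segA Δ) := by rwa [hl Δ List.mem_cons_self]
    obtain ⟨h₁, hr, hne₁⟩ := exists_segRemove_of_rList_cons_ne_none hne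
    obtain ⟨h₁', hr', -, hc₁⟩ := exists_segRemove_eq_some_of_atc_eq hc hr
    rw [hl Δ List.mem_cons_self] at hc₁
    simpa only [rList, Option.bind_some, hr'] using
      rList_ne_none_of_atc_eq (fun D hD => hl D (List.mem_cons_of_mem _ hD)) hc₁ hne₁

lemma fsList_swap {x y : Seg} {rest : List Seg} {h : Multiset Seg}
    (hax : segA x = a) (hay : segA y = a) (hrest : ∀ Δ ∈ rest, segA Δ = a)
    (hne : rList (y :: x :: rest) (some h) ≠ none) :
    fsList (y :: x :: rest) h = fsList (x :: y :: rest) h ∧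
      rList (x :: y :: rest) (some h) ≠ none := by
  obtain ⟨h₁, hr₁, hne₁⟩ := exists_segRemove_of_rList_cons_ne_none hne
  obtain ⟨h₂, hr₂, hne₂⟩ := exists_segRemove_of_rList_cons_ne_none hne₁
  obtain ⟨hc, hatc₁⟩ := segRemove_eq_some hr₁
  obtain ⟨hc', hatc₂⟩ := segRemove_eq_some hr₂
  rw [hay] at hc hatc₁
  rw [hax, hatc₁] at hc' hatc₂
  obtain ⟨d, e, hd, he, hde, herase⟩ := hc.swap hc'
  obtain ⟨h₁', hr₁', hUd, hatc₁'⟩ :=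
    IsShortestReaching.exists_segRemove_eq_some (hax ▸ hd)
  rw [hax] at hatc₁'
  obtain ⟨h₂', hr₂', hUe, hatc₂'⟩ :=
    IsShortestReaching.exists_segRemove_eq_some (hay ▸ hatc₁' ▸ he)
  rw [hay, hatc₁'] at hatc₂'
  have hc₂ : atc h₂ a = atc h₂' a := by rw [hatc₂, hatc₂', herase]
  constructor
  · simp only [fsList, hr₁, hr₂, hr₁', hr₂', hUd, hUe, fsList_congr_atc hrest hc₂, hde]
  · simpa only [rList, Option.bind_some, hr₁', hr₂'] using
      rList_ne_none_of_atc_eq hrest hc₂ hne₂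

lemma fsList_perm {l l' : List Seg} (hp : l.Perm l') {h : Multiset Seg}
    (hl : ∀ Δ ∈ l, segA Δ = a) (hne : rList l (some h) ≠ none) :
    fsList l h = fsList l' h ∧ rList l' (some h) ≠ none := by
  induction hp generalizing h with
  | nil => exact ⟨rfl, hne⟩
  | cons Δ _ ih =>
    obtain ⟨h₁, hr₁, hne₁⟩ := exists_segRemove_of_rList_cons_ne_none hne
    obtain ⟨hfs, hne'⟩ := ih (fun D hD => hl D (List.mem_cons_of_mem _ hD)) hne₁
    exact ⟨by simp only [fsList, hr₁, hfs],
      by simpa only [rList, Option.bind_some, hr₁] using hne'⟩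
  | swap x y rest =>
    exact fsList_swap (hl x (by simp)) (hl y (by simp)) (fun D hD => hl D (by simp [hD])) hne
  | trans hp₁ _ ih₁ ih₂ =>
    obtain ⟨hfs₁, hne₂⟩ := ih₁ hl hne
    obtain ⟨hfs₂, hne₃⟩ := ih₂ (fun D hD => hl D (hp₁.mem_iff.mpr hD)) hne₂
    exact ⟨hfs₁.trans hfs₂, hne₃⟩

end Sequential

/-- Lemma: `fs(m,h)` is well-defined: for segments all starting
at the same point `a`, the multiset of first segments produced sequentially is
independent of the chosen enumeration. -/
theorem statement1 (h : Multiset Seg) (a : ℤ) (l l' : List Seg)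
    (hperm : l.Perm l')
    (hstart : ∀ Δ ∈ l, segA Δ = a)
    (hadm : rM (l : Multiset Seg) h ≠ none) :
    fsList l h = fsList l' h := by
  have hsort : ((l : Multiset Seg).sort (· ≤ ·)).Perm l :=
    Multiset.coe_eq_coe.mp (Multiset.sort_eq _ _)
  obtain ⟨-, hne⟩ := fsList_perm hsort (fun Δ hΔ => hstart Δ (hsort.mem_iff.mp hΔ)) hadm
  exact (fsList_perm hperm hstart hne).1
end
end

section
/- Let h = {[0,3], [0,1], [1,2], [1,2], [2,2], [3,3]} (a multiset, with [1,2] of multiplicity two) and p = {[0,1], [1,2], [2,2], [3,3]}. Then S'(h,p) = {m : r(m,h) = p} consists of exactly the three multisegments {[0,3],[1,2]}, {[0,3],[1,1],[2,2]} and {[0,2],[1,3]}; moreover {[0,3],[1,1],[2,2]} and {[0,2],[1,3]} are two distinct ≤_Z-maximal elements of S'(h,p), where m is ≤_Z-maximal in S'(h,p) if no m' ∈ S'(h,p) satisfies m ≤_Z m' with m' ≠ m. In particular, a ≤_Z-maximal element of S'(h,p) need not be unique. -/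
noncomputable section
open Classical

/-! Removing a segment `Δ` from `h` removes exactly the integers of `Δ` from the cuspidal
support: along the removal sequence the truncations telescope. Hence every `m` with `r(m,h) = p`
has cuspidal support `csupp h - csupp p = {0,1,1,2,2,3}`, which bounds the multiplicity of a
segment `[a,b]` in `m` by those of `a` and `b`. The finitely many candidates are then checked by
evaluating a computable copy of `r(·,h)`. For the maximality claims: `{[0,3],[1,2]}` admits no
intersection-union operation, and each of the other two solutions leads only to it, so neither of
them lies strictly below another solution in `≤_Z`. -/

theorem Seg.le_iff_lex {D D' : Seg} :
    D ≤ D' ↔ segA D < segA D' ∨ (segA D = segA D' ∧ segB D ≤ segB D') :=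
  Prod.Lex.le_iff

theorem segA_le_segB (D : Seg) : segA D ≤ segB D := D.2

-- `Multiset.sort` is merge sort, whose well-founded recursion does not reduce in the kernel.
def sortImpl (m : Multiset Seg) : List Seg :=
  Quot.liftOn m (List.insertionSort (· ≤ ·)) fun l₁ l₂ h => by
    have := congrArg (Multiset.sort · (· ≤ ·)) (Multiset.coe_eq_coe.2 h)
    simpa only [Multiset.coe_sort, List.mergeSort_eq_insertionSort] using this

theorem sortImpl_eq_sort (m : Multiset Seg) : sortImpl m = m.sort (· ≤ ·) :=
  Quot.inductionOn m fun l => (List.mergeSort_eq_insertionSort (· ≤ ·) l).symm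

def leastImpl (h : Multiset Seg) (p : Seg → Prop) [DecidablePred p] : Option Seg :=
  (h.toFinset.filter p).min

theorem leastImpl_eq_none {h : Multiset Seg} {p : Seg → Prop} [DecidablePred p]
    (hp : leastImpl h p = none) {D : Seg} (hD : D ∈ h) : ¬ p D := fun hpD => by
  have := Finset.mem_filter.2 ⟨Multiset.mem_toFinset.2 hD, hpD⟩
  simp [Finset.min_eq_top.1 hp] at this

theorem leastImpl_eq_some {h : Multiset Seg} {p : Seg → Prop} [DecidablePred p] {D₀ : Seg}
    (hp : leastImpl h p = some D₀) : D₀ ∈ h ∧ p D₀ ∧ ∀ D ∈ h, p D → D₀ ≤ D := by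
  obtain ⟨hh, hpD₀⟩ := Finset.mem_filter.1 (Finset.mem_of_min hp)
  refine ⟨Multiset.mem_toFinset.1 hh, hpD₀, fun D hD hpD => WithTop.coe_le_coe.1 ?_⟩
  have := Finset.min_le (Finset.mem_filter.2 ⟨Multiset.mem_toFinset.2 hD, hpD⟩)
  rwa [show Finset.min _ = _ from hp] at this

theorem choose_eq_of_isLeast {P : Seg → Prop} (hx : ∃ D, P D ∧ ∀ D', P D' → D ≤ D')
    {D₀ : Seg} (h₀ : P D₀) (hmin : ∀ D', P D' → D₀ ≤ D') : Classical.choose hx = D₀ :=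
  le_antisymm ((Classical.choose_spec hx).2 _ h₀) (hmin _ (Classical.choose_spec hx).1)

def removalTailImpl (h : Multiset Seg) (b : ℤ) : ℕ → ℤ → ℤ → List Seg
  | 0, _, _ => []
  | fuel + 1, aprev, bprev =>
    match leastImpl h (fun D => aprev < segA D ∧ b ≤ segB D ∧ segB D < bprev) with
    | none => []
    | some D₀ => D₀ :: removalTailImpl h b fuel (segA D₀) (segB D₀)

def removalSeqImpl (Δ : Seg) (h : Multiset Seg) : List Seg :=
  match leastImpl h (fun D => segA D = segA Δ ∧ segB Δ ≤ segB D) with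
  | none => []
  | some D₀ => D₀ :: removalTailImpl h (segB Δ) (segB D₀ - segB Δ).toNat (segA D₀) (segB D₀)

def segRemoveImpl (Δ : Seg) (h : Multiset Seg) : Option (Multiset Seg) :=
  match removalSeqImpl Δ h with
  | [] => none
  | L => some (h - (L : Multiset Seg) + truncList (segB Δ) L)

def rListImpl : List Seg → Option (Multiset Seg) → Option (Multiset Seg)
  | [], o => o
  | Δ :: rest, o => rListImpl rest (o.bind (segRemoveImpl Δ))

def rMImpl (m h : Multiset Seg) : Option (Multiset Seg) :=
  rListImpl (sortImpl m) (some h)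

theorem removalTail_eq_removalTailImpl (h : Multiset Seg) (b : ℤ) (fuel : ℕ) (aprev bprev : ℤ) :
    removalTail h b fuel aprev bprev = removalTailImpl h b fuel aprev bprev := by
  induction fuel generalizing aprev bprev with
  | zero => rfl
  | succ n ih =>
    rw [removalTail, removalTailImpl]
    cases hD₀ : leastImpl h (fun D => aprev < segA D ∧ b ≤ segB D ∧ segB D < bprev) with
    | none =>
      rw [dif_neg]
      rintro ⟨D, ⟨hD, hcond⟩, -⟩
      exact leastImpl_eq_none hD₀ hD hcond
    | some D₀ =>
      obtain ⟨hmem, hcond, hmin⟩ := leastImpl_eq_some hD₀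
      have hx : ∃ D, (D ∈ h ∧ aprev < segA D ∧ b ≤ segB D ∧ segB D < bprev) ∧
          ∀ D', (D' ∈ h ∧ aprev < segA D' ∧ b ≤ segB D' ∧ segB D' < bprev) → D ≤ D' :=
        ⟨D₀, ⟨hmem, hcond⟩, fun D' hD' => hmin D' hD'.1 hD'.2⟩
      rw [dif_pos hx, choose_eq_of_isLeast hx ⟨hmem, hcond⟩ fun D' hD' => hmin D' hD'.1 hD'.2, ih]

theorem removalSeq_eq_removalSeqImpl (Δ : Seg) (h : Multiset Seg) :
    removalSeq Δ h = removalSeqImpl Δ h := by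
  rw [removalSeq, removalSeqImpl]
  cases hD₀ : leastImpl h (fun D => segA D = segA Δ ∧ segB Δ ≤ segB D) with
  | none =>
    rw [dif_neg]
    rintro ⟨D, ⟨hD, hcond⟩, -⟩
    exact leastImpl_eq_none hD₀ hD hcond
  | some D₀ =>
    obtain ⟨hmem, hcond, hmin⟩ := leastImpl_eq_some hD₀
    -- all candidates start at `segA Δ`, so `≤` compares them by their right ends
    have hlex {D D' : Seg} (ha : segA D = segA D') : D ≤ D' ↔ segB D ≤ segB D' := by
      rw [Seg.le_iff_lex]; omega
    have hx : ∃ D, (D ∈ h ∧ segA D = segA Δ ∧ segB Δ ≤ segB D) ∧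
        ∀ D', (D' ∈ h ∧ segA D' = segA Δ ∧ segB Δ ≤ segB D') → segB D ≤ segB D' :=
      ⟨D₀, ⟨hmem, hcond⟩, fun D' ⟨hD', hc'⟩ =>
        (hlex (hcond.1.trans hc'.1.symm)).1 (hmin D' hD' hc')⟩
    obtain ⟨⟨hcm, hca, hcb⟩, hcmin⟩ := Classical.choose_spec hx
    have hce : Classical.choose hx = D₀ := le_antisymm
      ((hlex (hca.trans hcond.1.symm)).2 (hcmin D₀ ⟨hmem, hcond⟩))
      (hmin _ hcm ⟨hca, hcb⟩)
    rw [dif_pos hx, hce, removalTail_eq_removalTailImpl]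

theorem removalSeqImpl_eq_nil_iff (Δ : Seg) (h : Multiset Seg) :
    removalSeqImpl Δ h = [] ↔ ¬ SegAdmissible Δ h := by
  rw [removalSeqImpl]
  cases hD₀ : leastImpl h (fun D => segA D = segA Δ ∧ segB Δ ≤ segB D) with
  | none => exact ⟨(fun _ ⟨_, hD, hcond⟩ => leastImpl_eq_none hD₀ hD hcond), fun _ => rfl⟩
  | some D₀ =>
    obtain ⟨hmem, hcond, -⟩ := leastImpl_eq_some hD₀
    exact ⟨fun hnil => absurd hnil (List.cons_ne_nil _ _), fun hn => absurd ⟨D₀, hmem, hcond⟩ hn⟩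

theorem segRemove_eq_segRemoveImpl (Δ : Seg) (h : Multiset Seg) :
    segRemove Δ h = segRemoveImpl Δ h := by
  rw [segRemove, segRemoveImpl, removalSeq_eq_removalSeqImpl]
  by_cases hadm : SegAdmissible Δ h
  · obtain ⟨D₀, T, hL⟩ := List.exists_cons_of_ne_nil
      (mt (removalSeqImpl_eq_nil_iff Δ h).1 (not_not.2 hadm))
    rw [if_pos hadm, hL]
  · rw [if_neg hadm, (removalSeqImpl_eq_nil_iff Δ h).2 hadm]

theorem rListImpl_none (l : List Seg) : rListImpl l none = none := by
  induction l with
  | nil => rfl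
  | cons Δ rest ih => exact ih

theorem rList_eq_rListImpl (l : List Seg) (o : Option (Multiset Seg)) :
    rList l o = rListImpl l o := by
  induction l generalizing o with
  | nil => rfl
  | cons Δ rest ih =>
    simp only [rList, rListImpl, ih]
    congr 2
    funext x
    exact segRemove_eq_segRemoveImpl Δ x

theorem rM_eq_rMImpl (m h : Multiset Seg) : rM m h = rMImpl m h := by
  rw [rM, rMImpl, sortImpl_eq_sort, rList_eq_rListImpl]

def RemovalLink (D D' : Seg) : Prop := segA D < segA D' ∧ segB D' < segB D

theorem removalTailImpl_spec (h : Multiset Seg) (b : ℤ) (fuel : ℕ) (aprev bprev : ℤ) :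
    (∀ D ∈ removalTailImpl h b fuel aprev bprev,
      D ∈ h ∧ b ≤ segB D ∧ aprev < segA D ∧ segB D < bprev) ∧
    (removalTailImpl h b fuel aprev bprev).Pairwise RemovalLink := by
  induction fuel generalizing aprev bprev with
  | zero => simp [removalTailImpl]
  | succ n ih =>
    rw [removalTailImpl]
    cases hD₀ : leastImpl h (fun D => aprev < segA D ∧ b ≤ segB D ∧ segB D < bprev) with
    | none => simp
    | some D₀ =>
      obtain ⟨hmem, ⟨h₁, h₂, h₃⟩, -⟩ := leastImpl_eq_some hD₀
      obtain ⟨ihm, ihp⟩ := ih (segA D₀) (segB D₀)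
      refine ⟨?_, List.pairwise_cons.2 ⟨fun D hD => ⟨(ihm D hD).2.2.1, (ihm D hD).2.2.2⟩, ihp⟩⟩
      rintro D (_ | ⟨_, hD⟩)
      · exact ⟨hmem, h₂, h₁, h₃⟩
      · obtain ⟨hh, hb, ha, hb'⟩ := ihm D hD
        exact ⟨hh, hb, by omega, by omega⟩

theorem removalSeqImpl_spec {Δ : Seg} {h : Multiset Seg} {D₀ : Seg} {T : List Seg}
    (hL : removalSeqImpl Δ h = D₀ :: T) :
    segA D₀ = segA Δ ∧ (∀ D ∈ D₀ :: T, D ∈ h ∧ segB Δ ≤ segB D) ∧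
      (D₀ :: T).Pairwise RemovalLink := by
  rw [removalSeqImpl] at hL
  cases hE : leastImpl h (fun D => segA D = segA Δ ∧ segB Δ ≤ segB D) with
  | none => simp [hE] at hL
  | some E =>
    simp only [hE, List.cons.injEq] at hL
    obtain ⟨rfl, rfl⟩ := hL
    obtain ⟨hmem, ⟨ha, hb⟩, -⟩ := leastImpl_eq_some hE
    obtain ⟨tm, tp⟩ := removalTailImpl_spec h (segB Δ) (segB E - segB Δ).toNat (segA E) (segB E)
    refine ⟨ha, ?_, List.pairwise_cons.2 ⟨fun D hD => ⟨(tm D hD).2.2.1, (tm D hD).2.2.2⟩, tp⟩⟩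
    rintro D (_ | ⟨_, hD⟩)
    · exact ⟨hmem, hb⟩
    · exact ⟨(tm D hD).1, (tm D hD).2.1⟩

theorem csupp_zero : csupp 0 = 0 := Multiset.zero_bind _

theorem csupp_add (s t : Multiset Seg) : csupp (s + t) = csupp s + csupp t :=
  Multiset.add_bind s t _

theorem csupp_cons (D : Seg) (s : Multiset Seg) :
    csupp (D ::ₘ s) = Multiset.Ico (segA D) (segB D + 1) + csupp s := by
  rw [csupp, Multiset.cons_bind, ← Finset.Ico_add_one_right_eq_Icc]
  rfl

theorem csupp_mkSeg? (a b : ℤ) : csupp (mkSeg? a b) = Multiset.Ico a (b + 1) := by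
  rw [mkSeg?]
  split
  · rw [← Multiset.cons_zero, csupp_cons, csupp_zero, add_zero]
    rfl
  · rw [csupp_zero, Multiset.Ico_eq_zero_of_le (by omega)]

-- For a whole removal sequence this says `csupp (Δ₁ + … + Δᵣ) = csupp (Δ₁ᵗʳ + … + Δᵣᵗʳ) + [a₁, b]`;
-- the correction term `[b+1, b(D)]` makes it hold for every suffix, hence provable by induction.
theorem csupp_add_Ico_eq_csupp_truncList (b : ℤ) (D : Seg) (T : List Seg)
    (hT : (D :: T).Pairwise RemovalLink) (hb : ∀ E ∈ D :: T, b ≤ segB E) :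
    csupp ↑(D :: T) + Multiset.Ico (b + 1) (segB D + 1)
      = csupp (truncList b (D :: T)) + Multiset.Ico (segA D) (segB D + 1) := by
  induction T generalizing D with
  | nil =>
    rw [truncList, csupp_mkSeg?, ← Multiset.cons_coe, csupp_cons, Multiset.coe_nil, csupp_zero,
      add_zero, add_comm]
  | cons D' T ih =>
    obtain ⟨hlink, hT'⟩ := List.pairwise_cons.1 hT
    obtain ⟨-, hbD'⟩ := hlink D' List.mem_cons_self
    have hbD : b ≤ segB D' := hb D' (List.mem_cons_of_mem _ List.mem_cons_self)
    have ih' := ih D' hT' fun E hE => hb E (List.mem_cons_of_mem _ hE)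
    have hsplit := Multiset.Ico_add_Ico_eq_Ico (by omega : b + 1 ≤ segB D' + 1)
      (by omega : segB D' + 1 ≤ segB D + 1)
    have hsplit' := Multiset.Ico_add_Ico_eq_Ico
      (by linarith [segA_le_segB D'] : segA D' ≤ segB D' + 1)
      (by omega : segB D' + 1 ≤ segB D + 1)
    rw [← Multiset.cons_coe, csupp_cons, truncList, csupp_add, csupp_mkSeg?, ← hsplit, ← hsplit']
    calc _ = (csupp ↑(D' :: T) + Multiset.Ico (b + 1) (segB D' + 1))
          + (Multiset.Ico (segA D) (segB D + 1) + Multiset.Ico (segB D' + 1) (segB D + 1)) := by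
          abel
      _ = _ := by rw [ih']; abel

theorem csupp_eq_of_segRemoveImpl {Δ : Seg} {h h' : Multiset Seg}
    (hr : segRemoveImpl Δ h = some h') :
    csupp h = csupp h' + Multiset.Ico (segA Δ) (segB Δ + 1) := by
  rw [segRemoveImpl] at hr
  cases hL : removalSeqImpl Δ h with
  | nil => simp [hL] at hr
  | cons D₀ T =>
    rw [hL, Option.some.injEq] at hr
    obtain ⟨ha, hmem, hpw⟩ := removalSeqImpl_spec hL
    have hle : (↑(D₀ :: T) : Multiset Seg) ≤ h :=
      (Multiset.le_iff_subset
        (Multiset.coe_nodup.2 (hpw.imp fun hl => ne_of_apply_ne segA hl.1.ne))).2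
        fun D hD => (hmem D hD).1
    have key := csupp_add_Ico_eq_csupp_truncList (segB Δ) D₀ T hpw fun E hE => (hmem E hE).2
    rw [← Multiset.Ico_add_Ico_eq_Ico (by linarith [segA_le_segB Δ] : segA D₀ ≤ segB Δ + 1)
      (by linarith [(hmem D₀ List.mem_cons_self).2] : segB Δ + 1 ≤ segB D₀ + 1), ha] at key
    have hchain : csupp ↑(D₀ :: T)
        = csupp (truncList (segB Δ) (D₀ :: T)) + Multiset.Ico (segA Δ) (segB Δ + 1) :=
      add_right_cancel (key.trans (by abel))
    calc csupp h = csupp (h - ↑(D₀ :: T)) + csupp ↑(D₀ :: T) := by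
          rw [← csupp_add, tsub_add_cancel_of_le hle]
      _ = csupp h' + Multiset.Ico (segA Δ) (segB Δ + 1) := by
          rw [hchain, ← hr, csupp_add]; abel

theorem csupp_eq_of_rListImpl (l : List Seg) {h p : Multiset Seg}
    (hr : rListImpl l (some h) = some p) : csupp h = csupp p + csupp ↑l := by
  induction l generalizing h with
  | nil => simp_all [rListImpl, csupp_zero]
  | cons Δ rest ih =>
    rw [rListImpl, Option.bind_some] at hr
    cases hs : segRemoveImpl Δ h with
    | none =>
      rw [hs, rListImpl_none] at hr
      exact absurd hr (Option.some_ne_none p).symm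
    | some h' =>
      rw [hs] at hr
      rw [csupp_eq_of_segRemoveImpl hs, ih hr, ← Multiset.cons_coe, csupp_cons]
      abel

theorem csupp_eq_of_rM {m h p : Multiset Seg} (hr : rM m h = some p) :
    csupp h = csupp p + csupp m := by
  rw [rM_eq_rMImpl, rMImpl] at hr
  simpa only [sortImpl_eq_sort, Multiset.sort_eq] using csupp_eq_of_rListImpl _ hr

theorem csupp_mono {s t : Multiset Seg} (hst : s ≤ t) : csupp s ≤ csupp t := by
  obtain ⟨u, rfl⟩ := Multiset.le_iff_exists_add.1 hst
  rw [csupp_add]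
  exact le_add_right le_rfl

theorem csupp_replicate (k : ℕ) (Δ : Seg) :
    csupp (Multiset.replicate k Δ) = k • Multiset.Ico (segA Δ) (segB Δ + 1) := by
  induction k with
  | zero => exact csupp_zero
  | succ k ih => rw [Multiset.replicate_succ, csupp_cons, ih, succ_nsmul, add_comm]

theorem count_le_count_csupp (m : Multiset Seg) {Δ : Seg} {x : ℤ} (h₁ : segA Δ ≤ x)
    (h₂ : x ≤ segB Δ) : m.count Δ ≤ (csupp m).count x := by
  have hx : (Multiset.Ico (segA Δ) (segB Δ + 1)).count x = 1 :=
    Multiset.count_eq_one_of_mem Multiset.nodup_Ico (Multiset.mem_Ico.2 ⟨h₁, by omega⟩)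
  calc m.count Δ = (csupp (Multiset.replicate (m.count Δ) Δ)).count x := by
        rw [csupp_replicate, Multiset.count_nsmul, hx, mul_one]
    _ ≤ (csupp m).count x :=
        Multiset.count_le_of_le _ (csupp_mono (Multiset.le_count_iff_replicate_le.1 le_rfl))

def segsWithin (lo hi : ℤ) : Finset Seg :=
  (Finset.Icc lo hi ×ˢ Finset.Icc lo hi).subtype fun p : ℤ × ℤ => p.1 ≤ p.2

theorem mem_segsWithin {lo hi : ℤ} {Δ : Seg} :
    Δ ∈ segsWithin lo hi ↔ (lo ≤ segA Δ ∧ segA Δ ≤ hi) ∧ lo ≤ segB Δ ∧ segB Δ ≤ hi :=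
  Finset.mem_subtype.trans (by rw [Finset.mem_product, Finset.mem_Icc, Finset.mem_Icc]; rfl)

def segBox (S : Multiset ℤ) (lo hi : ℤ) : Multiset Seg :=
  ∑ Δ ∈ segsWithin lo hi, Multiset.replicate (min (S.count (segA Δ)) (S.count (segB Δ))) Δ

theorem le_segBox_csupp {m : Multiset Seg} {lo hi : ℤ} (hm : ∀ x ∈ csupp m, lo ≤ x ∧ x ≤ hi) :
    m ≤ segBox (csupp m) lo hi := by
  rw [Multiset.le_iff_count]
  intro Δ
  rw [segBox, Multiset.count_sum']
  simp only [Multiset.count_replicate, Finset.sum_ite_eq', mem_segsWithin]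
  by_cases hΔ : Δ ∈ m
  · have hmem {x : ℤ} (h₁ : segA Δ ≤ x) (h₂ : x ≤ segB Δ) : x ∈ csupp m :=
      Multiset.count_pos.1 ((Multiset.count_pos.2 hΔ).trans_le (count_le_count_csupp m h₁ h₂))
    rw [if_pos ⟨hm _ (hmem le_rfl (segA_le_segB Δ)), hm _ (hmem (segA_le_segB Δ) le_rfl)⟩]
    exact le_min (count_le_count_csupp m le_rfl (segA_le_segB Δ))
      (count_le_count_csupp m (segA_le_segB Δ) le_rfl)
  · rw [Multiset.count_eq_zero_of_notMem hΔ]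
    exact Nat.zero_le _

def exH : Multiset Seg := {sg 0 3, sg 0 1, sg 1 2, sg 1 2, sg 2 2, sg 3 3}
def exP : Multiset Seg := {sg 0 1, sg 1 2, sg 2 2, sg 3 3}
def exA : Multiset Seg := {sg 0 3, sg 1 2}
def exB : Multiset Seg := {sg 0 3, sg 1 1, sg 2 2}
def exC : Multiset Seg := {sg 0 2, sg 1 3}

def exSupp : Multiset ℤ := {0, 1, 1, 2, 2, 3}

theorem csupp_exH : csupp exH = csupp exP + exSupp := by decide

theorem segBox_exSupp : segBox exSupp 0 3 =
    {sg 0 0, sg 0 1, sg 0 2, sg 0 3, sg 1 1, sg 1 1, sg 1 2, sg 1 2, sg 1 3, sg 2 2, sg 2 2,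
      sg 2 3, sg 3 3} := by decide

set_option maxRecDepth 20000 in
theorem eq_exA_or_exB_or_exC_of_rMImpl {M : Multiset Seg} (hM : M ≤ segBox exSupp 0 3)
    (hcs : csupp M = exSupp) (hr : rMImpl M exH = some exP) : M = exA ∨ M = exB ∨ M = exC := by
  have hcheck : ∀ M ∈ (segBox exSupp 0 3).powerset, csupp M = exSupp →
      rMImpl M exH = some exP → M = exA ∨ M = exB ∨ M = exC := by
    rw [segBox_exSupp]
    decide +kernel
  exact hcheck M (Multiset.mem_powerset.2 hM) hcs hr

theorem rM_exH_eq_some_exP_iff (m : Multiset Seg) :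
    rM m exH = some exP ↔ m = exA ∨ m = exB ∨ m = exC := by
  refine ⟨fun hr => ?_, by rintro (rfl | rfl | rfl) <;> rw [rM_eq_rMImpl] <;> decide⟩
  have hcs : csupp m = exSupp := add_left_cancel ((csupp_eq_of_rM hr).symm.trans csupp_exH)
  have hbox : m ≤ segBox exSupp 0 3 := by
    rw [← hcs]
    exact le_segBox_csupp (by rw [hcs]; decide)
  exact eq_exA_or_exB_or_exC_of_rMImpl hbox hcs ((rM_eq_rMImpl m exH).symm.trans hr)

instance (Δ Δ' : Seg) : Decidable (Subseg Δ Δ') := inferInstanceAs (Decidable (_ ∧ _))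

instance (Δ Δ' : Seg) : Decidable (Linked Δ Δ') := inferInstanceAs (Decidable (_ ∧ _ ∧ ¬ _ ∧ ¬ _))

def iuNeighbours (m : Multiset Seg) : Multiset (Multiset Seg) :=
  m.bind fun Δ => ((m.erase Δ).filter (Linked Δ)).map fun Δ' =>
    (m.erase Δ).erase Δ' + mkSeg? (min (segA Δ) (segA Δ')) (max (segB Δ) (segB Δ'))
      + mkSeg? (max (segA Δ) (segA Δ')) (min (segB Δ) (segB Δ'))

theorem mem_iuNeighbours_of_elemIU {m n : Multiset Seg} (h : elemIU m n) : n ∈ iuNeighbours m := by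
  obtain ⟨Δ, Δ', hΔ, hΔ', hl, rfl⟩ := h
  exact Multiset.mem_bind.2 ⟨Δ, hΔ, Multiset.mem_map.2 ⟨Δ', Multiset.mem_filter.2 ⟨hΔ', hl⟩, rfl⟩⟩

theorem mem_of_leZ_of_iuNeighbours_closed {S : Multiset (Multiset Seg)}
    (hS : ∀ a ∈ S, ∀ b ∈ iuNeighbours a, b ∈ S) {m n : Multiset Seg} (hm : m ∈ S) (h : leZ n m) :
    n ∈ S := by
  induction h with
  | refl => exact hm
  | tail _ hbc ih => exact hS _ ih _ (mem_iuNeighbours_of_elemIU hbc)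

theorem eq_exB_of_leZ {m : Multiset Seg} (hm : m = exA ∨ m = exB ∨ m = exC) (hz : leZ exB m) :
    m = exB := by
  have hclosed := @mem_of_leZ_of_iuNeighbours_closed {exA, exC} (by decide)
  rcases hm with rfl | rfl | rfl
  · exact absurd (hclosed (by decide) hz) (by decide)
  · rfl
  · exact absurd (hclosed (by decide) hz) (by decide)

theorem eq_exC_of_leZ {m : Multiset Seg} (hm : m = exA ∨ m = exB ∨ m = exC) (hz : leZ exC m) :
    m = exC := by
  have hclosed := @mem_of_leZ_of_iuNeighbours_closed {exA, exB} (by decide)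
  rcases hm with rfl | rfl | rfl
  · exact absurd (hclosed (by decide) hz) (by decide)
  · exact absurd (hclosed (by decide) hz) (by decide)
  · rfl

/-- an explicit example with two distinct `≤_Z`-maximal
elements in `S'(h,p)`. -/
theorem statement14 :
    (∀ m : Multiset Seg,
        rM m ({sg 0 3, sg 0 1, sg 1 2, sg 1 2, sg 2 2, sg 3 3} : Multiset Seg)
            = some ({sg 0 1, sg 1 2, sg 2 2, sg 3 3} : Multiset Seg) ↔
          (m = {sg 0 3, sg 1 2} ∨ m = {sg 0 3, sg 1 1, sg 2 2} ∨
            m = {sg 0 2, sg 1 3})) ∧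
    ({sg 0 3, sg 1 1, sg 2 2} : Multiset Seg) ≠ {sg 0 2, sg 1 3} ∧
    (∀ m' : Multiset Seg,
        rM m' ({sg 0 3, sg 0 1, sg 1 2, sg 1 2, sg 2 2, sg 3 3} : Multiset Seg)
            = some ({sg 0 1, sg 1 2, sg 2 2, sg 3 3} : Multiset Seg) →
        leZ ({sg 0 3, sg 1 1, sg 2 2} : Multiset Seg) m' →
        m' = {sg 0 3, sg 1 1, sg 2 2}) ∧
    (∀ m' : Multiset Seg,
        rM m' ({sg 0 3, sg 0 1, sg 1 2, sg 1 2, sg 2 2, sg 3 3} : Multiset Seg)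
            = some ({sg 0 1, sg 1 2, sg 2 2, sg 3 3} : Multiset Seg) →
        leZ ({sg 0 2, sg 1 3} : Multiset Seg) m' →
        m' = {sg 0 2, sg 1 3}) := by
  refine ⟨rM_exH_eq_some_exP_iff, by decide, fun m hr hz => ?_, fun m hr hz => ?_⟩
  · exact eq_exB_of_leZ ((rM_exH_eq_some_exP_iff m).1 hr) hz
  · exact eq_exC_of_leZ ((rM_exH_eq_some_exP_iff m).1 hr) hz
end
end

section
/- Let h be a multisegment, Δ a segment admissible to h, and Δ' = [a',b'] a segment linked to Δ with Δ < Δ', and suppose the triple (Δ, Δ', h) satisfies the non-overlapping property. Then for any segment Δ̃ = [ã, b'] with ã ≥ a' that is linked to Δ, the triple (Δ, Δ̃, h) also satisfies the non-overlapping property. -/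
noncomputable section
open Classical

/-!
The removal sequence for `(Δ, h)` is a strictly nested chain whose segments all reach `b(Δ)` and
whose first segment starts at `a(Δ)`. Hence for `x ≤ x' ≤ b(Δ)` the shortest segment of the
chain containing `x` also contains `x'`, so the shortest one containing `x'` ends no later.
With `x = a' - 1` and `x' = ã - 1`: if `Δ̃ ⊆ Δ̄'` then `b' ≤ b(Δ̄') ≤ b(Δ̄)`, and `a(Δ̄) ≤ a' - 1`,
so `Δ' ⊆ Δ̄`.
-/

lemma removalTail_mem {h : Multiset Seg} {b : ℤ} :
    ∀ {fuel : ℕ} {aprev bprev : ℤ} {D : Seg}, D ∈ removalTail h b fuel aprev bprev →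
      aprev < segA D ∧ b ≤ segB D ∧ segB D < bprev
  | 0, _, _, _, hD => by simp [removalTail] at hD
  | fuel + 1, aprev, bprev, D, hD => by
    rw [removalTail] at hD
    split at hD
    · rename_i hx
      have hspec := (Classical.choose_spec hx).1.2
      rcases List.mem_cons.mp hD with rfl | hD
      · exact hspec
      · obtain ⟨ha, hb, hb'⟩ := removalTail_mem hD
        exact ⟨hspec.1.trans ha, hb, hb'.trans hspec.2.2⟩
    · simp at hD

lemma removalTail_pairwise (h : Multiset Seg) (b : ℤ) :
    ∀ (fuel : ℕ) (aprev bprev : ℤ),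
      (removalTail h b fuel aprev bprev).Pairwise
        (fun D D' => segA D < segA D' ∧ segB D' < segB D)
  | 0, _, _ => by simp [removalTail]
  | fuel + 1, aprev, bprev => by
    rw [removalTail]
    split
    · exact List.Pairwise.cons (fun D' hD' => ⟨(removalTail_mem hD').1, (removalTail_mem hD').2.2⟩)
        (removalTail_pairwise h b fuel _ _)
    · exact List.Pairwise.nil

lemma removalSeq_pairwise (Δ : Seg) (h : Multiset Seg) :
    (removalSeq Δ h).Pairwise (fun D D' => segA D < segA D' ∧ segB D' < segB D) := by
  rw [removalSeq]
  split
  · exact List.Pairwise.cons (fun D' hD' => ⟨(removalTail_mem hD').1, (removalTail_mem hD').2.2⟩)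
      (removalTail_pairwise h _ _ _ _)
  · exact List.Pairwise.nil

lemma segB_le_of_mem_removalSeq {Δ D : Seg} {h : Multiset Seg} (hD : D ∈ removalSeq Δ h) :
    segB Δ ≤ segB D := by
  rw [removalSeq] at hD
  split at hD
  · rename_i hx
    rcases List.mem_cons.mp hD with rfl | hD
    · exact (Classical.choose_spec hx).1.2.2
    · exact (removalTail_mem hD).2.1
  · simp at hD

lemma exists_mem_removalSeq_segA_eq {Δ : Seg} {h : Multiset Seg} (hadm : SegAdmissible Δ h) :
    ∃ D ∈ removalSeq Δ h, segA D = segA Δ := by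
  have hx : ∃ D, (D ∈ h ∧ segA D = segA Δ ∧ segB Δ ≤ segB D) ∧
      ∀ D', (D' ∈ h ∧ segA D' = segA Δ ∧ segB Δ ≤ segB D') → segB D ≤ segB D' := by
    obtain ⟨D, hD, hDa, hDb⟩ := hadm
    obtain ⟨D₁, hD₁, hmin⟩ := Set.exists_min_image
      {D | D ∈ h ∧ segA D = segA Δ ∧ segB Δ ≤ segB D} segB
      (h.finite_toSet.subset fun _ hD => hD.1) ⟨D, hD, hDa, hDb⟩
    exact ⟨D₁, hD₁, hmin⟩
  rw [removalSeq, dif_pos hx]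
  exact ⟨_, List.mem_cons_self, (Classical.choose_spec hx).1.2.1⟩

lemma shortestCont_spec {Δ D : Seg} {h : Multiset Seg} {x : ℤ} (hD : D ∈ removalSeq Δ h)
    (hxD : segA D ≤ x ∧ x ≤ segB D) :
    shortestCont Δ h x ∈ removalSeq Δ h ∧ segA (shortestCont Δ h x) ≤ x ∧
      segB (shortestCont Δ h x) ≤ segB D := by
  set l := (removalSeq Δ h).filter (fun D => decide (segA D ≤ x ∧ x ≤ segB D))
  have hDl : D ∈ l := List.mem_filter.mpr ⟨hD, by simpa using hxD⟩
  have hsc : shortestCont Δ h x = l.getLast (List.ne_nil_of_mem hDl) := by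
    rw [shortestCont, List.getLast?_eq_some_getLast (List.ne_nil_of_mem hDl)]
    rfl
  have hlast := List.mem_filter.mp (List.getLast_mem (List.ne_nil_of_mem hDl))
  have hpw : l.Pairwise (fun D D' => segB D' ≤ segB D) :=
    ((removalSeq_pairwise Δ h).imp fun hDD' => hDD'.2.le).sublist List.filter_sublist
  rw [hsc]
  exact ⟨hlast.1, (by simpa using hlast.2 : _ ∧ _).1,
    hpw.rel_getLast_of_rel_getLast_getLast hDl le_rfl⟩

lemma segB_shortestCont_le_of_le {Δ D : Seg} {h : Multiset Seg} {x x' : ℤ}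
    (hD : D ∈ removalSeq Δ h) (hxD : segA D ≤ x ∧ x ≤ segB D) (hxx' : x ≤ x')
    (hx' : x' ≤ segB Δ) :
    segB (shortestCont Δ h x') ≤ segB (shortestCont Δ h x) := by
  obtain ⟨hmem, hax, -⟩ := shortestCont_spec hD hxD
  have hbx := segB_le_of_mem_removalSeq hmem
  exact (shortestCont_spec hmem ⟨hax.trans hxx', hx'.trans hbx⟩).2.2

/-- the non-overlapping property is inherited by segments
`[ã, b']` with `ã ≥ a'` linked to `Δ`. -/
theorem statement17 (h : Multiset Seg) (Δ Δ' Δt : Seg)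
    (hadm : SegAdmissible Δ h) (hlink : Linked Δ Δ') (hlt : segB Δ < segB Δ')
    (hno : NonOverlap Δ Δ' h)
    (hb : segB Δt = segB Δ') (ha : segA Δ' ≤ segA Δt) (hlinkt : Linked Δ Δt) :
    NonOverlap Δ Δt h := by
  intro hsub
  apply hno
  have haΔ : segA Δ < segA Δ' := by
    by_contra hc
    exact hlink.2.2.1 ⟨le_of_not_gt hc, hlt.le⟩
  obtain ⟨D₁, hD₁, hD₁a⟩ := exists_mem_removalSeq_segA_eq hadm
  have hxD₁ : segA D₁ ≤ segA Δ' - 1 ∧ segA Δ' - 1 ≤ segB D₁ := by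
    have := segB_le_of_mem_removalSeq hD₁
    have := hlink.2.1
    omega
  have hax := (shortestCont_spec hD₁ hxD₁).2.1
  have hbb := segB_shortestCont_le_of_le hD₁ hxD₁ (x' := segA Δt - 1) (by omega)
    (by have := hlinkt.2.1; omega)
  exact ⟨by omega, hb ▸ hsub.2.trans hbb⟩
end
end
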